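/- Assume A_n → A almost everywhere on Ω and u_n ⇀ u weakly in L²(μ; ℝ^d). Then the quadratic energy is weakly lower semicontinuous along the sequence: ∫_Ω ⟨A(x)u(x), u(x)⟩ dμ(x) ≤ liminf_{n→∞} ∫_Ω ⟨A_n(x)u_n(x), u_n(x)⟩ dμ(x). -/

import Mathlib

/-!
Since `A_n(x)` is symmetric with nonnegative quadratic form, `⟨A_n (u_n - u), u_n - u⟩ ≥ 0`
gives pointwise `⟨A_n u_n, u_n⟩ ≥ 2 ⟨A u, u_n⟩ + 2 ⟨(A_n - A) u, u_n⟩ - ⟨A_n u, u⟩`.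
After integration, the first term converges to `2 ∫ ⟨A u, u⟩` by weak convergence and the last
one to `∫ ⟨A u, u⟩` by dominated convergence. By Young's inequality the middle term is at least
`-ε ‖u_n‖² - ε⁻¹ ‖(A_n - A) u‖²`, where `‖(A_n - A) u‖ → 0` by dominated convergence and
`‖u_n‖` is bounded by the uniform boundedness principle. Hence the `liminf` is at least
`∫ ⟨A u, u⟩ - ε sup_n ‖u_n‖²` for every `ε > 0`.
-/

open MeasureTheory Matrix Filter Topology

section

variable {ι : Type*} [Fintype ι]

theorem dotProduct_self_nonneg (v : ι → ℝ) : 0 ≤ v ⬝ᵥ v :=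
  dotProduct_self_star_nonneg v

theorem two_mul_abs_dotProduct_le {ε : ℝ} (hε : 0 < ε) (x y : ι → ℝ) :
    2 * |x ⬝ᵥ y| ≤ ε * (x ⬝ᵥ x) + ε⁻¹ * (y ⬝ᵥ y) := by
  have expand : ∀ s : ℝ, (ε • x + s • y) ⬝ᵥ (ε • x + s • y)
      = ε ^ 2 * (x ⬝ᵥ x) + 2 * ε * s * (x ⬝ᵥ y) + s ^ 2 * (y ⬝ᵥ y) := by
    intro s
    simp only [add_dotProduct, dotProduct_add, smul_dotProduct, dotProduct_smul, smul_eq_mul,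
      dotProduct_comm y x]
    ring
  have hplus := dotProduct_self_nonneg (ε • x + (1 : ℝ) • y)
  have hminus := dotProduct_self_nonneg (ε • x + (-1 : ℝ) • y)
  rw [expand] at hplus hminus
  rw [← mul_le_mul_iff_of_pos_left hε, mul_add, ← mul_assoc ε ε⁻¹, mul_inv_cancel₀ hε.ne']
  rcases abs_cases (x ⬝ᵥ y) with ⟨h, -⟩ | ⟨h, -⟩ <;> rw [h] <;> nlinarith

theorem dotProduct_sub_self_le (x y : ι → ℝ) :
    (x - y) ⬝ᵥ (x - y) ≤ 2 * (x ⬝ᵥ x) + 2 * (y ⬝ᵥ y) := by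
  have := dotProduct_self_nonneg (x + y)
  simp only [sub_dotProduct, dotProduct_sub, add_dotProduct, dotProduct_add,
    dotProduct_comm y x] at this ⊢
  linarith

namespace Matrix

/-- `M` is symmetric and `0 ≤ M ≤ K • 1` in the Loewner order. -/
structure IsPosSemidefLE (M : Matrix ι ι ℝ) (K : ℝ) : Prop where
  isSymm : M.IsSymm
  nonneg : ∀ ξ, 0 ≤ ξ ⬝ᵥ M *ᵥ ξ
  le : ∀ ξ, ξ ⬝ᵥ M *ᵥ ξ ≤ K * (ξ ⬝ᵥ ξ)

namespace IsSymm

variable {M : Matrix ι ι ℝ}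

theorem dotProduct_mulVec_comm (hM : M.IsSymm) (x y : ι → ℝ) :
    x ⬝ᵥ M *ᵥ y = y ⬝ᵥ M *ᵥ x := by
  rw [dotProduct_mulVec, ← mulVec_transpose, hM.eq, dotProduct_comm]

theorem dotProduct_mulVec_sq_le (hM : M.IsSymm) (hnonneg : ∀ ξ, 0 ≤ ξ ⬝ᵥ M *ᵥ ξ)
    (x y : ι → ℝ) : (x ⬝ᵥ M *ᵥ y) ^ 2 ≤ (x ⬝ᵥ M *ᵥ x) * (y ⬝ᵥ M *ᵥ y) := by
  have hquad (t : ℝ) :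
      0 ≤ (y ⬝ᵥ M *ᵥ y) * (t * t) + 2 * (x ⬝ᵥ M *ᵥ y) * t + x ⬝ᵥ M *ᵥ x := by
    have := hnonneg (x + t • y)
    simp only [mulVec_add, mulVec_smul, dotProduct_add, add_dotProduct, dotProduct_smul,
      smul_dotProduct, smul_eq_mul, hM.dotProduct_mulVec_comm y x] at this
    linarith
  have := discrim_le_zero hquad
  rw [discrim] at this
  linarith

theorem two_mul_dotProduct_mulVec_sub_le (hM : M.IsSymm) (hnonneg : ∀ ξ, 0 ≤ ξ ⬝ᵥ M *ᵥ ξ)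
    (x y : ι → ℝ) : 2 * (x ⬝ᵥ M *ᵥ y) - y ⬝ᵥ M *ᵥ y ≤ x ⬝ᵥ M *ᵥ x := by
  have := hnonneg (x - y)
  simp only [mulVec_sub, dotProduct_sub, sub_dotProduct, hM.dotProduct_mulVec_comm y x] at this
  linarith

end IsSymm

namespace IsPosSemidefLE

variable {M N : Matrix ι ι ℝ} {K : ℝ}

theorem abs_dotProduct_mulVec_le (hM : M.IsPosSemidefLE K) (ξ : ι → ℝ) :
    |ξ ⬝ᵥ M *ᵥ ξ| ≤ K * (ξ ⬝ᵥ ξ) :=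
  (abs_of_nonneg (hM.nonneg ξ)).trans_le (hM.le ξ)

theorem mulVec_dotProduct_mulVec_le (hM : M.IsPosSemidefLE K) (ξ : ι → ℝ) :
    M *ᵥ ξ ⬝ᵥ M *ᵥ ξ ≤ K ^ 2 * (ξ ⬝ᵥ ξ) := by
  set η := M *ᵥ ξ
  have hle : (η ⬝ᵥ η) * (η ⬝ᵥ η) ≤ (K ^ 2 * (ξ ⬝ᵥ ξ)) * (η ⬝ᵥ η) := by
    calc (η ⬝ᵥ η) * (η ⬝ᵥ η) = (ξ ⬝ᵥ M *ᵥ η) ^ 2 := by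
          rw [hM.isSymm.dotProduct_mulVec_comm ξ η, sq]
      _ ≤ (ξ ⬝ᵥ M *ᵥ ξ) * (η ⬝ᵥ M *ᵥ η) := hM.isSymm.dotProduct_mulVec_sq_le hM.nonneg ξ η
      _ ≤ (K * (ξ ⬝ᵥ ξ)) * (K * (η ⬝ᵥ η)) :=
          mul_le_mul (hM.le ξ) (hM.le η) (hM.nonneg η) ((hM.nonneg ξ).trans (hM.le ξ))
      _ = (K ^ 2 * (ξ ⬝ᵥ ξ)) * (η ⬝ᵥ η) := by ring
  rcases (dotProduct_self_nonneg η).eq_or_lt with h | h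
  · rw [← h]; exact mul_nonneg (sq_nonneg K) (dotProduct_self_nonneg ξ)
  · exact le_of_mul_le_mul_right hle h

theorem sub_mulVec_dotProduct_sub_mulVec_le (hM : M.IsPosSemidefLE K) (hN : N.IsPosSemidefLE K)
    (ξ : ι → ℝ) : (M - N) *ᵥ ξ ⬝ᵥ (M - N) *ᵥ ξ ≤ 4 * K ^ 2 * (ξ ⬝ᵥ ξ) := by
  rw [sub_mulVec]
  linarith [dotProduct_sub_self_le (M *ᵥ ξ) (N *ᵥ ξ), hM.mulVec_dotProduct_mulVec_le ξ,
    hN.mulVec_dotProduct_mulVec_le ξ]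

end IsPosSemidefLE

end Matrix

theorem exists_norm_le_of_bddAbove_inner {E κ : Type*} [NormedAddCommGroup E]
    [InnerProductSpace ℝ E] [CompleteSpace E] {f : κ → E}
    (h : ∀ g, BddAbove (Set.range fun n => |inner ℝ (f n) g|)) : ∃ C, ∀ n, ‖f n‖ ≤ C := by
  obtain ⟨C, hC⟩ := banach_steinhaus (g := fun n => innerSL ℝ (f n)) fun g =>
    let ⟨C, hC⟩ := h g; ⟨C, fun n => hC ⟨n, rfl⟩⟩
  exact ⟨C, fun n => by simpa only [innerSL_apply_norm] using hC n⟩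

theorem EuclideanSpace.norm_toLp_sq (v : ι → ℝ) : ‖WithLp.toLp 2 v‖ ^ 2 = v ⬝ᵥ v := by
  rw [← real_inner_self_eq_norm_sq, EuclideanSpace.inner_toLp_toLp]
  rfl

section L2

variable {Ω : Type*} [MeasurableSpace Ω] {μ : Measure Ω}

theorem Measurable.dotProduct {f g : Ω → ι → ℝ} (hf : Measurable f) (hg : Measurable g) :
    Measurable fun x => f x ⬝ᵥ g x :=
  (continuous_fst.dotProduct continuous_snd).measurable2 hf hg

theorem measurable_mulVec {A : Ω → Matrix ι ι ℝ} (hA : ∀ i j, Measurable fun x => A x i j)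
    {f : Ω → ι → ℝ} (hf : Measurable f) : Measurable fun x => A x *ᵥ f x :=
  measurable_pi_lambda _ fun i => (measurable_pi_lambda _ (hA i)).dotProduct hf

theorem memLp_toLp_of_integrable_dotProduct_self {f : Ω → ι → ℝ} (hf : Measurable f)
    (hfL2 : Integrable (fun x => f x ⬝ᵥ f x) μ) : MemLp (fun x => WithLp.toLp 2 (f x)) 2 μ := by
  refine (memLp_two_iff_integrable_sq_norm
    ((WithLp.measurable_toLp 2 _).comp hf).aestronglyMeasurable).2 ?_
  simpa only [Function.comp_apply, EuclideanSpace.norm_toLp_sq] using hfL2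

theorem exists_integral_dotProduct_self_le {u : ℕ → Ω → ι → ℝ} (hu : ∀ n, Measurable (u n))
    (huL2 : ∀ n, Integrable (fun x => u n x ⬝ᵥ u n x) μ)
    (hbdd : ∀ v : Ω → ι → ℝ, Measurable v → Integrable (fun x => v x ⬝ᵥ v x) μ →
      BddAbove (Set.range fun n => |∫ x, u n x ⬝ᵥ v x ∂μ|)) :
    ∃ C, ∀ n, ∫ x, u n x ⬝ᵥ u n x ∂μ ≤ C := by
  let F n : Lp (EuclideanSpace ℝ ι) 2 μ :=
    (memLp_toLp_of_integrable_dotProduct_self (hu n) (huL2 n)).toLp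
  have hF n : F n =ᵐ[μ] fun x => WithLp.toLp 2 (u n x) := MemLp.coeFn_toLp _
  have inner_F n (g : Lp (EuclideanSpace ℝ ι) 2 μ) :
      inner ℝ (F n) g = ∫ x, u n x ⬝ᵥ WithLp.ofLp (g x) ∂μ := by
    rw [MeasureTheory.L2.inner_def]
    refine integral_congr_ae ?_
    filter_upwards [hF n] with x hx
    rw [hx, EuclideanSpace.inner_eq_star_dotProduct]
    exact dotProduct_comm _ _
  obtain ⟨C, hC⟩ := exists_norm_le_of_bddAbove_inner (f := F) fun g => by
    have hg : Measurable fun x => WithLp.ofLp (g x) :=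
      (WithLp.measurable_ofLp 2 _).comp (Lp.stronglyMeasurable g).measurable
    have hgL2 : Integrable (fun x => WithLp.ofLp (g x) ⬝ᵥ WithLp.ofLp (g x)) μ := by
      simpa only [← EuclideanSpace.norm_toLp_sq, WithLp.toLp_ofLp] using
        (Lp.memLp g).integrable_norm_pow two_ne_zero
    simpa only [inner_F] using hbdd _ hg hgL2
  refine ⟨C ^ 2, fun n => ?_⟩
  calc ∫ x, u n x ⬝ᵥ u n x ∂μ = ‖F n‖ ^ 2 := by
        rw [← real_inner_self_eq_norm_sq, inner_F]
        refine integral_congr_ae ?_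
        filter_upwards [hF n] with x hx
        rw [hx, WithLp.ofLp_toLp]
    _ ≤ C ^ 2 := pow_le_pow_left₀ (norm_nonneg _) (hC n) 2

end L2

theorem le_liminf_of_tendsto_sub_mul_le {I c : ℕ → ℝ} {b : ℝ → ℕ → ℝ} {E C : ℝ}
    (hI : IsBoundedUnder (· ≤ ·) atTop I) (hc : ∀ n, c n ≤ C)
    (hb : ∀ ε > 0, Tendsto (b ε) atTop (𝓝 E)) (hle : ∀ ε > 0, ∀ n, b ε n - ε * c n ≤ I n) :
    E ≤ liminf I atTop := by
  have hε : ∀ ε > 0, E - ε * C ≤ liminf I atTop := by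
    intro ε hε
    have hlim : Tendsto (fun n => b ε n - ε * C) atTop (𝓝 (E - ε * C)) :=
      (hb ε hε).sub_const _
    rw [← hlim.liminf_eq]
    refine liminf_le_liminf (Eventually.of_forall fun n => ?_) hlim.isBoundedUnder_ge
      hI.isCoboundedUnder_flip
    exact (sub_le_sub_left (mul_le_mul_of_nonneg_left (hc n) hε.le) _).trans (hle ε hε n)
  have hcont : Tendsto (fun ε => E - ε * C) (𝓝[>] 0) (𝓝 E) :=
    ((continuous_const.sub (continuous_id.mul continuous_const)).tendsto' 0 E
      (by simp)).mono_left nhdsWithin_le_nhds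
  exact le_of_tendsto hcont (eventually_nhdsWithin_of_forall hε)

section Energy

variable {Ω : Type*} [MeasurableSpace Ω] {μ : Measure Ω} {K : ℝ}

theorem integrable_dotProduct_of_integrable_dotProduct_self {f g : Ω → ι → ℝ}
    (hf : Measurable f) (hg : Measurable g) (hfL2 : Integrable (fun x => f x ⬝ᵥ f x) μ)
    (hgL2 : Integrable (fun x => g x ⬝ᵥ g x) μ) : Integrable (fun x => f x ⬝ᵥ g x) μ := by
  refine ((hfL2.add hgL2).div_const 2).mono' (hf.dotProduct hg).aestronglyMeasurable
    (Eventually.of_forall fun x => ?_)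
  have := two_mul_abs_dotProduct_le one_pos (f x) (g x)
  rw [Real.norm_eq_abs]
  simp only [Pi.add_apply, inv_one, one_mul] at this ⊢
  linarith

theorem integrable_dotProduct_mulVec_self {A : Ω → Matrix ι ι ℝ} {f : Ω → ι → ℝ}
    (hA : ∀ i j, Measurable fun x => A x i j) (hAK : ∀ᵐ x ∂μ, (A x).IsPosSemidefLE K)
    (hf : Measurable f) (hfL2 : Integrable (fun x => f x ⬝ᵥ f x) μ) :
    Integrable (fun x => f x ⬝ᵥ A x *ᵥ f x) μ :=
  (hfL2.const_mul K).mono' (hf.dotProduct (measurable_mulVec hA hf)).aestronglyMeasurable <| by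
    filter_upwards [hAK] with x hx
    exact hx.abs_dotProduct_mulVec_le (f x)

theorem integrable_mulVec_dotProduct_mulVec_self {A : Ω → Matrix ι ι ℝ} {f : Ω → ι → ℝ}
    (hA : ∀ i j, Measurable fun x => A x i j) (hAK : ∀ᵐ x ∂μ, (A x).IsPosSemidefLE K)
    (hf : Measurable f) (hfL2 : Integrable (fun x => f x ⬝ᵥ f x) μ) :
    Integrable (fun x => A x *ᵥ f x ⬝ᵥ A x *ᵥ f x) μ := by
  have hAf := measurable_mulVec hA hf
  refine (hfL2.const_mul (K ^ 2)).mono' (hAf.dotProduct hAf).aestronglyMeasurable ?_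
  filter_upwards [hAK] with x hx
  rw [Real.norm_eq_abs, abs_of_nonneg (dotProduct_self_nonneg _)]
  exact hx.mulVec_dotProduct_mulVec_le (f x)

theorem integrable_sub_mulVec_dotProduct_sub_mulVec {B Bl : Ω → Matrix ι ι ℝ} {g : Ω → ι → ℝ}
    (hB : ∀ i j, Measurable fun x => B x i j) (hBl : ∀ i j, Measurable fun x => Bl x i j)
    (hBK : ∀ᵐ x ∂μ, (B x).IsPosSemidefLE K ∧ (Bl x).IsPosSemidefLE K) (hg : Measurable g)
    (hgL2 : Integrable (fun x => g x ⬝ᵥ g x) μ) :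
    Integrable (fun x => (B x - Bl x) *ᵥ g x ⬝ᵥ (B x - Bl x) *ᵥ g x) μ := by
  have hw : Measurable fun x => (B x - Bl x) *ᵥ g x :=
    measurable_mulVec (A := fun x => B x - Bl x) (fun i j => (hB i j).sub (hBl i j)) hg
  refine (hgL2.const_mul (4 * K ^ 2)).mono' (hw.dotProduct hw).aestronglyMeasurable ?_
  filter_upwards [hBK] with x hx
  rw [Real.norm_eq_abs, abs_of_nonneg (dotProduct_self_nonneg _)]
  exact hx.1.sub_mulVec_dotProduct_sub_mulVec_le hx.2 (g x)

theorem le_integral_dotProduct_mulVec_self {B Bl : Ω → Matrix ι ι ℝ} {f g : Ω → ι → ℝ} {ε : ℝ}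
    (hε : 0 < ε) (hB : ∀ i j, Measurable fun x => B x i j)
    (hBl : ∀ i j, Measurable fun x => Bl x i j) (hf : Measurable f) (hg : Measurable g)
    (hfL2 : Integrable (fun x => f x ⬝ᵥ f x) μ) (hgL2 : Integrable (fun x => g x ⬝ᵥ g x) μ)
    (hBK : ∀ᵐ x ∂μ, (B x).IsPosSemidefLE K ∧ (Bl x).IsPosSemidefLE K) :
    2 * ∫ x, f x ⬝ᵥ Bl x *ᵥ g x ∂μ - ε⁻¹ * ∫ x, (B x - Bl x) *ᵥ g x ⬝ᵥ (B x - Bl x) *ᵥ g x ∂μ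
        - ∫ x, g x ⬝ᵥ B x *ᵥ g x ∂μ - ε * ∫ x, f x ⬝ᵥ f x ∂μ ≤
      ∫ x, f x ⬝ᵥ B x *ᵥ f x ∂μ := by
  have int_cross : Integrable (fun x => 2 * (f x ⬝ᵥ Bl x *ᵥ g x)) μ :=
    (integrable_dotProduct_of_integrable_dotProduct_self hf (measurable_mulVec hBl hg) hfL2
      (integrable_mulVec_dotProduct_mulVec_self hBl (hBK.mono fun _ h => h.2) hg hgL2)).const_mul 2
  have int_w : Integrable (fun x => ε⁻¹ * ((B x - Bl x) *ᵥ g x ⬝ᵥ (B x - Bl x) *ᵥ g x)) μ :=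
    (integrable_sub_mulVec_dotProduct_sub_mulVec hB hBl hBK hg hgL2).const_mul _
  have int_gBg := integrable_dotProduct_mulVec_self hB (hBK.mono fun _ h => h.1) hg hgL2
  have int_fBf := integrable_dotProduct_mulVec_self hB (hBK.mono fun _ h => h.1) hf hfL2
  have int_cw : Integrable (fun x => 2 * (f x ⬝ᵥ Bl x *ᵥ g x)
      - ε⁻¹ * ((B x - Bl x) *ᵥ g x ⬝ᵥ (B x - Bl x) *ᵥ g x)) μ := int_cross.sub int_w
  have int_cwg : Integrable (fun x => 2 * (f x ⬝ᵥ Bl x *ᵥ g x)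
      - ε⁻¹ * ((B x - Bl x) *ᵥ g x ⬝ᵥ (B x - Bl x) *ᵥ g x) - g x ⬝ᵥ B x *ᵥ g x) μ :=
    int_cw.sub int_gBg
  have pointwise : ∀ᵐ x ∂μ, 2 * (f x ⬝ᵥ Bl x *ᵥ g x)
      - ε⁻¹ * ((B x - Bl x) *ᵥ g x ⬝ᵥ (B x - Bl x) *ᵥ g x) - g x ⬝ᵥ B x *ᵥ g x
      - ε * (f x ⬝ᵥ f x) ≤ f x ⬝ᵥ B x *ᵥ f x := by
    filter_upwards [hBK] with x hx
    have hpsd := hx.1.isSymm.two_mul_dotProduct_mulVec_sub_le hx.1.nonneg (f x) (g x)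
    have hyoung := two_mul_abs_dotProduct_le hε (f x) ((B x - Bl x) *ᵥ g x)
    have hsplit : f x ⬝ᵥ B x *ᵥ g x = f x ⬝ᵥ Bl x *ᵥ g x + f x ⬝ᵥ (B x - Bl x) *ᵥ g x := by
      rw [sub_mulVec, dotProduct_sub]; ring
    linarith [neg_abs_le (f x ⬝ᵥ (B x - Bl x) *ᵥ g x)]
  calc _ = ∫ x, 2 * (f x ⬝ᵥ Bl x *ᵥ g x)
          - ε⁻¹ * ((B x - Bl x) *ᵥ g x ⬝ᵥ (B x - Bl x) *ᵥ g x) - g x ⬝ᵥ B x *ᵥ g x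
          - ε * (f x ⬝ᵥ f x) ∂μ := by
        rw [integral_sub int_cwg (hfL2.const_mul ε), integral_sub int_cw int_gBg,
          integral_sub int_cross int_w, integral_const_mul, integral_const_mul, integral_const_mul]
    _ ≤ _ := integral_mono_ae (int_cwg.sub (hfL2.const_mul ε)) int_fBf pointwise

theorem tendsto_integral_dotProduct_mulVec_self {A : ℕ → Ω → Matrix ι ι ℝ}
    {Alim : Ω → Matrix ι ι ℝ} {g : Ω → ι → ℝ} (hA : ∀ n i j, Measurable fun x => A n x i j)
    (hg : Measurable g) (hgL2 : Integrable (fun x => g x ⬝ᵥ g x) μ)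
    (hAK : ∀ᵐ x ∂μ, ∀ n, (A n x).IsPosSemidefLE K)
    (hlim : ∀ᵐ x ∂μ, Tendsto (fun n => A n x) atTop (𝓝 (Alim x))) :
    Tendsto (fun n => ∫ x, g x ⬝ᵥ A n x *ᵥ g x ∂μ) atTop (𝓝 (∫ x, g x ⬝ᵥ Alim x *ᵥ g x ∂μ)) := by
  refine tendsto_integral_of_dominated_convergence (fun x => K * (g x ⬝ᵥ g x))
    (fun n => (hg.dotProduct (measurable_mulVec (hA n) hg)).aestronglyMeasurable)
    (hgL2.const_mul K) (fun n => ?_) ?_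
  · filter_upwards [hAK] with x hx
    exact (hx n).abs_dotProduct_mulVec_le (g x)
  · filter_upwards [hlim] with x hx
    exact ((continuous_const.dotProduct (continuous_id.matrix_mulVec continuous_const)).tendsto
      (Alim x)).comp hx

theorem tendsto_integral_sub_mulVec_dotProduct_sub_mulVec {A : ℕ → Ω → Matrix ι ι ℝ}
    {Alim : Ω → Matrix ι ι ℝ} {g : Ω → ι → ℝ} (hA : ∀ n i j, Measurable fun x => A n x i j)
    (hAlim : ∀ i j, Measurable fun x => Alim x i j)
    (hg : Measurable g) (hgL2 : Integrable (fun x => g x ⬝ᵥ g x) μ)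
    (hAK : ∀ᵐ x ∂μ, (∀ n, (A n x).IsPosSemidefLE K) ∧ (Alim x).IsPosSemidefLE K)
    (hlim : ∀ᵐ x ∂μ, Tendsto (fun n => A n x) atTop (𝓝 (Alim x))) :
    Tendsto (fun n => ∫ x, (A n x - Alim x) *ᵥ g x ⬝ᵥ (A n x - Alim x) *ᵥ g x ∂μ) atTop
      (𝓝 0) := by
  have hw n : Measurable fun x => (A n x - Alim x) *ᵥ g x :=
    measurable_mulVec (A := fun x => A n x - Alim x) (fun i j => (hA n i j).sub (hAlim i j)) hg
  have hdom := tendsto_integral_of_dominated_convergence (fun x => 4 * K ^ 2 * (g x ⬝ᵥ g x))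
    (fun n => ((hw n).dotProduct (hw n)).aestronglyMeasurable) (hgL2.const_mul _)
    (fun n => by
      filter_upwards [hAK] with x hx
      rw [Real.norm_eq_abs, abs_of_nonneg (dotProduct_self_nonneg _)]
      exact (hx.1 n).sub_mulVec_dotProduct_sub_mulVec_le hx.2 (g x))
    (by
      filter_upwards [hlim] with x hx
      have hcont : Continuous fun M : Matrix ι ι ℝ => (M - Alim x) *ᵥ g x :=
        (continuous_id.sub continuous_const).matrix_mulVec continuous_const
      exact ((hcont.dotProduct hcont).tendsto (Alim x)).comp hx)
  simpa using hdom

theorem integral_dotProduct_mulVec_self_le_liminf {A : ℕ → Ω → Matrix ι ι ℝ}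
    {Alim : Ω → Matrix ι ι ℝ} {u : ℕ → Ω → ι → ℝ} {ulim : Ω → ι → ℝ} (hK : 0 ≤ K)
    (hA : ∀ n i j, Measurable fun x => A n x i j) (hAlim : ∀ i j, Measurable fun x => Alim x i j)
    (hAK : ∀ᵐ x ∂μ, (∀ n, (A n x).IsPosSemidefLE K) ∧ (Alim x).IsPosSemidefLE K)
    (hlim : ∀ᵐ x ∂μ, Tendsto (fun n => A n x) atTop (𝓝 (Alim x)))
    (hu : ∀ n, Measurable (u n)) (hulim : Measurable ulim)
    (huL2 : ∀ n, Integrable (fun x => u n x ⬝ᵥ u n x) μ)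
    (hulimL2 : Integrable (fun x => ulim x ⬝ᵥ ulim x) μ)
    (hweak : ∀ v : Ω → ι → ℝ, Measurable v → Integrable (fun x => v x ⬝ᵥ v x) μ →
      Tendsto (fun n => ∫ x, u n x ⬝ᵥ v x ∂μ) atTop (𝓝 (∫ x, ulim x ⬝ᵥ v x ∂μ))) :
    ∫ x, ulim x ⬝ᵥ Alim x *ᵥ ulim x ∂μ ≤
      liminf (fun n => ∫ x, u n x ⬝ᵥ A n x *ᵥ u n x ∂μ) atTop := by
  obtain ⟨C, hC⟩ := exists_integral_dotProduct_self_le hu huL2 fun v hv hvL2 =>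
    (hweak v hv hvL2).abs.bddAbove_range
  have hAnK n : ∀ᵐ x ∂μ, (A n x).IsPosSemidefLE K := hAK.mono fun _ h => h.1 n
  -- `liminf` on `ℝ` is junk for sequences unbounded above.
  have energy_le n : ∫ x, u n x ⬝ᵥ A n x *ᵥ u n x ∂μ ≤ K * C := by
    calc _ ≤ ∫ x, K * (u n x ⬝ᵥ u n x) ∂μ :=
          integral_mono_ae (integrable_dotProduct_mulVec_self (hA n) (hAnK n) (hu n) (huL2 n))
            ((huL2 n).const_mul K) ((hAnK n).mono fun x hx => hx.le (u n x))
      _ ≤ K * C := by rw [integral_const_mul]; exact mul_le_mul_of_nonneg_left (hC n) hK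
  have hv := measurable_mulVec hAlim hulim
  have hvL2 :=
    integrable_mulVec_dotProduct_mulVec_self hAlim (hAK.mono fun _ h => h.2) hulim hulimL2
  refine le_liminf_of_tendsto_sub_mul_le ⟨K * C, eventually_map.2 (.of_forall energy_le)⟩ hC
    (fun ε hε => ?_) (fun ε hε n => le_integral_dotProduct_mulVec_self hε (hA n) hAlim (hu n)
      hulim (huL2 n) hulimL2 (hAK.mono fun _ h => ⟨h.1 n, h.2⟩))
  have hlimits := (((hweak _ hv hvL2).const_mul 2).sub
    ((tendsto_integral_sub_mulVec_dotProduct_sub_mulVec hA hAlim hulim hulimL2 hAK hlim).const_mul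
      ε⁻¹)).sub (tendsto_integral_dotProduct_mulVec_self hA hulim hulimL2
        (hAK.mono fun _ h => h.1) hlim)
  convert hlimits using 2
  ring

end Energy

end

theorem energy_weak_lower_semicontinuity_general
    (Ω : Type*) [MeasurableSpace Ω] (μ : Measure Ω)
    (d : ℕ) (k₀ k₁ : ℝ) (hk₀ : 0 < k₀) (hk : k₀ ≤ k₁)
    (A : ℕ → Ω → Matrix (Fin d) (Fin d) ℝ) (Alim : Ω → Matrix (Fin d) (Fin d) ℝ)
    (hAmeas : ∀ n, ∀ i j, Measurable fun x => A n x i j)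
    (hAlimmeas : ∀ i j, Measurable fun x => Alim x i j)
    (hsymm : ∀ᵐ x ∂μ, (∀ n, (A n x).IsSymm) ∧ (Alim x).IsSymm)
    (hellip : ∀ᵐ x ∂μ, ∀ ξ : Fin d → ℝ,
      (∀ n, k₀ * (ξ ⬝ᵥ ξ) ≤ ξ ⬝ᵥ ((A n x) *ᵥ ξ) ∧ ξ ⬝ᵥ ((A n x) *ᵥ ξ) ≤ k₁ * (ξ ⬝ᵥ ξ)) ∧
        (k₀ * (ξ ⬝ᵥ ξ) ≤ ξ ⬝ᵥ ((Alim x) *ᵥ ξ) ∧ ξ ⬝ᵥ ((Alim x) *ᵥ ξ) ≤ k₁ * (ξ ⬝ᵥ ξ)))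
    (hae : ∀ᵐ x ∂μ, Tendsto (fun n => A n x) atTop (nhds (Alim x)))
    (u : ℕ → Ω → Fin d → ℝ) (ulim : Ω → Fin d → ℝ)
    (humeas : ∀ n, Measurable (u n)) (hulimmeas : Measurable ulim)
    (huL2 : ∀ n, Integrable (fun x => u n x ⬝ᵥ u n x) μ)
    (hulimL2 : Integrable (fun x => ulim x ⬝ᵥ ulim x) μ)
    (hweak : ∀ v : Ω → Fin d → ℝ, Measurable v → Integrable (fun x => v x ⬝ᵥ v x) μ →
      Tendsto (fun n => ∫ x, u n x ⬝ᵥ v x ∂μ) atTop (nhds (∫ x, ulim x ⬝ᵥ v x ∂μ))) :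
    (∫ x, ulim x ⬝ᵥ ((Alim x) *ᵥ ulim x) ∂μ) ≤
      liminf (fun n => ∫ x, u n x ⬝ᵥ ((A n x) *ᵥ u n x) ∂μ) atTop := by
  have hbounds : ∀ᵐ x ∂μ,
      (∀ n, (A n x).IsPosSemidefLE k₁) ∧ (Alim x).IsPosSemidefLE k₁ := by
    filter_upwards [hsymm, hellip] with x hs he
    have hnonneg (ξ : Fin d → ℝ) : 0 ≤ k₀ * (ξ ⬝ᵥ ξ) :=
      mul_nonneg hk₀.le (dotProduct_self_nonneg ξ)
    exact ⟨fun n => ⟨hs.1 n, fun ξ => (hnonneg ξ).trans ((he ξ).1 n).1, fun ξ => ((he ξ).1 n).2⟩,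
      ⟨hs.2, fun ξ => (hnonneg ξ).trans (he ξ).2.1, fun ξ => (he ξ).2.2⟩⟩
  exact integral_dotProduct_mulVec_self_le_liminf (hk₀.le.trans hk) hAmeas hAlimmeas hbounds hae
    humeas hulimmeas huL2 hulimL2 hweak

/-- Weak lower semicontinuity of the quadratic energy: if `A_n, A` are
measurable, a.e. symmetric, uniformly elliptic and bounded matrix fields with `A_n → A`
a.e., and `u_n ⇀ u` weakly in `L²(μ; ℝ^d)`, then
`∫ ⟨A u, u⟩ dμ ≤ liminf_n ∫ ⟨A_n u_n, u_n⟩ dμ`. -/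
theorem energy_weak_lower_semicontinuity
    (Ω : Type*) [MeasurableSpace Ω] (μ : Measure Ω) [SigmaFinite μ]
    (d : ℕ) (hd : 1 ≤ d) (k₀ k₁ : ℝ) (hk₀ : 0 < k₀) (hk : k₀ ≤ k₁)
    (A : ℕ → Ω → Matrix (Fin d) (Fin d) ℝ) (Alim : Ω → Matrix (Fin d) (Fin d) ℝ)
    (hAmeas : ∀ n, ∀ i j, Measurable fun x => A n x i j)
    (hAlimmeas : ∀ i j, Measurable fun x => Alim x i j)
    (hsymm : ∀ᵐ x ∂μ, (∀ n, (A n x).IsSymm) ∧ (Alim x).IsSymm)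
    (hellip : ∀ᵐ x ∂μ, ∀ ξ : Fin d → ℝ,
      (∀ n, k₀ * (ξ ⬝ᵥ ξ) ≤ ξ ⬝ᵥ ((A n x) *ᵥ ξ) ∧ ξ ⬝ᵥ ((A n x) *ᵥ ξ) ≤ k₁ * (ξ ⬝ᵥ ξ)) ∧
        (k₀ * (ξ ⬝ᵥ ξ) ≤ ξ ⬝ᵥ ((Alim x) *ᵥ ξ) ∧ ξ ⬝ᵥ ((Alim x) *ᵥ ξ) ≤ k₁ * (ξ ⬝ᵥ ξ)))
    (hae : ∀ᵐ x ∂μ, Tendsto (fun n => A n x) atTop (nhds (Alim x)))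
    (u : ℕ → Ω → Fin d → ℝ) (ulim : Ω → Fin d → ℝ)
    (humeas : ∀ n, Measurable (u n)) (hulimmeas : Measurable ulim)
    (huL2 : ∀ n, Integrable (fun x => u n x ⬝ᵥ u n x) μ)
    (hulimL2 : Integrable (fun x => ulim x ⬝ᵥ ulim x) μ)
    (hweak : ∀ v : Ω → Fin d → ℝ, Measurable v → Integrable (fun x => v x ⬝ᵥ v x) μ →
      Tendsto (fun n => ∫ x, u n x ⬝ᵥ v x ∂μ) atTop (nhds (∫ x, ulim x ⬝ᵥ v x ∂μ))) :
    (∫ x, ulim x ⬝ᵥ ((Alim x) *ᵥ ulim x) ∂μ) ≤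
      liminf (fun n => ∫ x, u n x ⬝ᵥ ((A n x) *ᵥ u n x) ∂μ) atTop :=
  energy_weak_lower_semicontinuity_general Ω μ d k₀ k₁ hk₀ hk A Alim hAmeas hAlimmeas hsymm hellip
    hae u ulim humeas hulimmeas huL2 hulimL2 hweak
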